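/- Let q + q_d·ε be a unit dual quaternion with q ≠ −1. Then Û(M(q + q_d·ε)) = q + q_d·ε; that is, U(R(q)) = q and (1/2)·U(R(q))·(2·q⁻¹·q_d) = q_d. -/

import Mathlib

open scoped Classical in
/-- The UQ operator `U : ℝ³ → ℍ`, `U(r) = [cos(‖r‖/2), (r/‖r‖)·sin(‖r‖/2)]` for `r ≠ 0`, `U(0) = 1`. -/
noncomputable def UQ (r : EuclideanSpace ℝ (Fin 3)) : Quaternion ℝ :=
  if r = 0 then 1 else
    ⟨Real.cos (‖r‖ / 2),
     Real.sin (‖r‖ / 2) / ‖r‖ * r 0,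
     Real.sin (‖r‖ / 2) / ‖r‖ * r 1,
     Real.sin (‖r‖ / 2) / ‖r‖ * r 2⟩

/-- The rotation operator `R : ℍ → ℝ³`,
`R(q) = (2·arccos(q₀)/√(q₁²+q₂²+q₃²))·(q₁,q₂,q₃)` if `q₀² ≠ 1`, and `0` otherwise. -/
noncomputable def Rop (q : Quaternion ℝ) : EuclideanSpace ℝ (Fin 3) :=
  if q.re ^ 2 = 1 then 0 else
    (2 * Real.arccos q.re / Real.sqrt (q.imI ^ 2 + q.imJ ^ 2 + q.imK ^ 2)) •
      (WithLp.equiv 2 (Fin 3 → ℝ)).symm ![q.imI, q.imJ, q.imK]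

/-! Write a unit quaternion as `q = cos θ + sin θ · u` with `θ = arccos q₀` and `u` a unit vector.
When `θ ∈ (0, π)`, `R(q) = 2θ · u` has norm `2θ`, so `U` recovers `cos θ` and `sin θ · u`.
The remaining unit quaternions `±1` have `R(q) = 0` and `U(0) = 1`, which is why `q = -1` is
excluded. The dual part only uses `q * q⁻¹ = 1` and that `2` is central. -/

namespace Quaternion

theorem sq_re_add_sq_im_eq_one {q : ℍ[ℝ]} (hq : ‖q‖ = 1) :
    q.re ^ 2 + q.imI ^ 2 + q.imJ ^ 2 + q.imK ^ 2 = 1 := by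
  rw [← normSq_def', normSq_eq_norm_mul_self, hq, one_mul]

theorem eq_one_of_re_sq_eq_one {q : ℍ[ℝ]} (hq : ‖q‖ = 1) (hne : q ≠ -1)
    (hre : q.re ^ 2 = 1) : q = 1 := by
  have hunit := sq_re_add_sq_im_eq_one hq
  have hI : q.imI = 0 := by nlinarith [sq_nonneg q.imJ, sq_nonneg q.imK]
  have hJ : q.imJ = 0 := by nlinarith [sq_nonneg q.imI, sq_nonneg q.imK]
  have hK : q.imK = 0 := by nlinarith [sq_nonneg q.imI, sq_nonneg q.imJ]
  rcases sq_eq_one_iff.mp hre with h | h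
  · ext <;> simp [*]
  · exact absurd (by ext <;> simp [*]) hne

noncomputable def imVec (q : ℍ[ℝ]) : EuclideanSpace ℝ (Fin 3) :=
  (WithLp.equiv 2 (Fin 3 → ℝ)).symm ![q.imI, q.imJ, q.imK]

theorem norm_imVec (q : ℍ[ℝ]) : ‖q.imVec‖ = √(q.imI ^ 2 + q.imJ ^ 2 + q.imK ^ 2) := by
  simp [imVec, EuclideanSpace.norm_eq, Fin.sum_univ_three]

end Quaternion

open Quaternion

theorem two_inv_smul_mul_two_mul_inv_mul {A : Type*} [DivisionRing A] [Module ℝ A] {q : A}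
    (hq : q ≠ 0) (p : A) : (2⁻¹ : ℝ) • (q * ((2 : A) * q⁻¹ * p)) = p := by
  rw [(Commute.ofNat_left 2 q⁻¹).eq, ← mul_assoc, ← mul_assoc, mul_inv_cancel₀ hq, one_mul,
    two_mul, ← two_smul ℝ, smul_smul, inv_mul_cancel₀ two_ne_zero, one_smul]

theorem UQ_smul_of_sin_eq {v : EuclideanSpace ℝ (Fin 3)} {θ : ℝ} (hθ : 0 ≤ θ) (hv : v ≠ 0)
    (hsin : Real.sin θ = ‖v‖) : UQ ((2 * θ / ‖v‖) • v) = ⟨Real.cos θ, v 0, v 1, v 2⟩ := by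
  have hv' : ‖v‖ ≠ 0 := norm_ne_zero_iff.mpr hv
  have hnorm : ‖(2 * θ / ‖v‖) • v‖ = 2 * θ := by
    rw [norm_smul, Real.norm_of_nonneg (by positivity), div_mul_cancel₀ _ hv']
  have hθ0 : θ ≠ 0 := by
    rintro rfl
    exact hv' (by simpa using hsin.symm)
  have hne : (2 * θ / ‖v‖) • v ≠ 0 := by
    rw [← norm_ne_zero_iff, hnorm]
    positivity
  simp only [UQ, hne, ↓reduceIte, hnorm, mul_div_cancel_left₀ θ two_ne_zero, hsin]
  ext <;> simp only [PiLp.smul_apply, smul_eq_mul] <;> field_simp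

theorem Rop_of_re_sq_ne_one {q : ℍ[ℝ]} (hre : q.re ^ 2 ≠ 1) :
    Rop q = (2 * Real.arccos q.re / ‖q.imVec‖) • q.imVec := by
  rw [Rop, if_neg hre, norm_imVec, imVec]

theorem UQ_Rop {q : ℍ[ℝ]} (hq : ‖q‖ = 1) (hne : q ≠ -1) : UQ (Rop q) = q := by
  by_cases hre : q.re ^ 2 = 1
  · rw [eq_one_of_re_sq_eq_one hq hne hre]
    simp [Rop, UQ]
  have hunit := sq_re_add_sq_im_eq_one hq
  obtain ⟨hre₁, hre₂⟩ : -1 < q.re ∧ q.re < 1 := by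
    rw [← abs_lt, ← sq_lt_one_iff_abs_lt_one]
    exact lt_of_le_of_ne (by nlinarith [sq_nonneg q.imI, sq_nonneg q.imJ, sq_nonneg q.imK]) hre
  have hsin : Real.sin (Real.arccos q.re) = ‖q.imVec‖ := by
    rw [Real.sin_arccos, norm_imVec]
    congr 1
    linarith
  have hv : q.imVec ≠ 0 := by
    rw [← norm_ne_zero_iff, ← hsin]
    exact (Real.sin_pos_of_pos_of_lt_pi (Real.arccos_pos.mpr hre₂)
      (Real.arccos_lt_pi.mpr hre₁)).ne'
  rw [Rop_of_re_sq_ne_one hre, UQ_smul_of_sin_eq (Real.arccos_nonneg _) hv hsin,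
    Real.cos_arccos hre₁.le hre₂.le]
  rfl

theorem Uhat_motion_general (q qd : Quaternion ℝ) (hq : ‖q‖ = 1)
    (hne : q ≠ -1) :
    UQ (Rop q) = q ∧
      (2⁻¹ : ℝ) • (UQ (Rop q) * ((2 : Quaternion ℝ) * q⁻¹ * qd)) = qd := by
  have hq0 : q ≠ 0 := by
    rintro rfl
    simp at hq
  rw [UQ_Rop hq hne]
  exact ⟨rfl, two_inv_smul_mul_two_mul_inv_mul hq0 qd⟩

/-- If `q + q_d·ε` is a unit dual quaternion with `q ≠ −1`, then `Û(M(q + q_d·ε)) = q + q_d·ε`: namely `U(R(q)) = q` and `(1/2)·U(R(q))·(2·q⁻¹·q_d) = q_d`. -/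
theorem Uhat_motion (q qd : Quaternion ℝ) (hq : ‖q‖ = 1)
    (h : q * star qd + qd * star q = 0) (hne : q ≠ -1) :
    UQ (Rop q) = q ∧
      (2⁻¹ : ℝ) • (UQ (Rop q) * ((2 : Quaternion ℝ) * q⁻¹ * qd)) = qd :=
  Uhat_motion_general q qd hq hne
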